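/- Let f be uniformly continuous on B' with modulus: ‖f(t₁,x) - f(t₂,y)‖₁ ≤ ε/2 whenever |t₁ - t₂| ≤ δ and ‖x - y‖₁ ≤ δ. Let φ be the Euler polygon built on a partition of mesh at most min(δ, δ/C) with slopes s_i satisfying ‖s_i - f(c_i, φ(c_i))‖₁ ≤ ε/2 and ‖s_i‖₁ ≤ C. Then for t in the interior of the i-th subinterval, ‖φ(t) - φ(c_i)‖₁ ≤ δ, and hence ‖s_i - f(t, φ(t))‖₁ ≤ ε. -/

import Mathlib

open Set

noncomputable def norm1 {n : ℕ} (v : Fin n → ℝ) : ℝ := ∑ i, |v i|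

section norm1

variable {n : ℕ}

lemma norm1_nonneg (v : Fin n → ℝ) : 0 ≤ norm1 v :=
  Finset.sum_nonneg fun i _ => abs_nonneg (v i)

lemma norm1_smul (c : ℝ) (v : Fin n → ℝ) : norm1 (c • v) = |c| * norm1 v := by
  simp only [norm1, Pi.smul_apply, smul_eq_mul, abs_mul, Finset.mul_sum]

lemma norm1_sub_comm (v w : Fin n → ℝ) : norm1 (v - w) = norm1 (w - v) := by
  simp only [norm1, Pi.sub_apply, abs_sub_comm]

lemma norm1_sub_le_add (u v w : Fin n → ℝ) :
    norm1 (u - w) ≤ norm1 (u - v) + norm1 (v - w) := by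
  unfold norm1
  rw [← Finset.sum_add_distrib]
  exact Finset.sum_le_sum fun i _ => abs_sub_le (u i) (v i) (w i)

lemma norm1_smul_le_of_le_div {h δ C : ℝ} {s : Fin n → ℝ} (hC : 0 < C) (h₀ : 0 ≤ h)
    (hh : h ≤ δ / C) (hs : norm1 s ≤ C) : norm1 (h • s) ≤ δ :=
  calc norm1 (h • s) = h * norm1 s := by rw [norm1_smul, abs_of_nonneg h₀]
    _ ≤ δ / C * C := mul_le_mul hh hs (norm1_nonneg s) (h₀.trans hh)
    _ = δ := div_mul_cancel₀ δ hC.ne'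

end norm1

theorem euler_step_estimate_general (n : ℕ) (f : ℝ → (Fin n → ℝ) → (Fin n → ℝ))
    (ε δ C : ℝ) (hC : 0 < C)
    (hmod : ∀ t₁ t₂ : ℝ, ∀ x y : Fin n → ℝ,
      |t₁ - t₂| ≤ δ → norm1 (x - y) ≤ δ → norm1 (f t₁ x - f t₂ y) ≤ ε / 2)
    (cᵢ cᵢ₁ : ℝ) (hmesh : cᵢ₁ - cᵢ ≤ min δ (δ / C))
    (φᵢ : Fin n → ℝ) (s : Fin n → ℝ)
    (hs : norm1 (s - f cᵢ φᵢ) ≤ ε / 2) (hsC : norm1 s ≤ C)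
    (φ : ℝ → Fin n → ℝ)
    (hφ : ∀ t ∈ Icc cᵢ cᵢ₁, φ t = φᵢ + (t - cᵢ) • s) :
    ∀ t ∈ Ioo cᵢ cᵢ₁, norm1 (φ t - φᵢ) ≤ δ ∧ norm1 (s - f t (φ t)) ≤ ε := by
  intro t ht
  have h₀ : 0 ≤ t - cᵢ := by linarith [ht.1]
  have hstep : t - cᵢ ≤ min δ (δ / C) := by linarith [ht.2]
  have hdisp : norm1 (φ t - φᵢ) ≤ δ := by
    rw [hφ t (Ioo_subset_Icc_self ht), add_sub_cancel_left]
    exact norm1_smul_le_of_le_div hC h₀ (hstep.trans (min_le_right _ _)) hsC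
  have hclose : norm1 (f cᵢ φᵢ - f t (φ t)) ≤ ε / 2 := by
    refine hmod cᵢ t φᵢ (φ t) ?_ (by rwa [norm1_sub_comm])
    rw [abs_sub_comm, abs_of_nonneg h₀]
    exact hstep.trans (min_le_left _ _)
  refine ⟨hdisp, ?_⟩
  calc norm1 (s - f t (φ t)) ≤ norm1 (s - f cᵢ φᵢ) + norm1 (f cᵢ φᵢ - f t (φ t)) :=
        norm1_sub_le_add _ _ _
    _ ≤ ε / 2 + ε / 2 := add_le_add hs hclose
    _ = ε := add_halves ε

/-- One step of the Euler polygon: on a subinterval of mesh at most `min δ (δ/C)`,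
the polygon moves at most `δ` from its left endpoint value, and the slope is an
`ε`-approximation of the vector field along the polygon. -/
theorem euler_step_estimate (n : ℕ) (f : ℝ → (Fin n → ℝ) → (Fin n → ℝ))
    (ε δ C : ℝ) (hε : 0 < ε) (hδ : 0 < δ) (hC : 0 < C)
    (hmod : ∀ t₁ t₂ : ℝ, ∀ x y : Fin n → ℝ,
      |t₁ - t₂| ≤ δ → norm1 (x - y) ≤ δ → norm1 (f t₁ x - f t₂ y) ≤ ε / 2)
    (cᵢ cᵢ₁ : ℝ) (hc : cᵢ < cᵢ₁) (hmesh : cᵢ₁ - cᵢ ≤ min δ (δ / C))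
    (φᵢ : Fin n → ℝ) (s : Fin n → ℝ)
    (hs : norm1 (s - f cᵢ φᵢ) ≤ ε / 2) (hsC : norm1 s ≤ C)
    (φ : ℝ → Fin n → ℝ)
    (hφ : ∀ t ∈ Icc cᵢ cᵢ₁, φ t = φᵢ + (t - cᵢ) • s) :
    ∀ t ∈ Ioo cᵢ cᵢ₁, norm1 (φ t - φᵢ) ≤ δ ∧ norm1 (s - f t (φ t)) ≤ ε :=
  euler_step_estimate_general n f ε δ C hC hmod cᵢ cᵢ₁ hmesh φᵢ s hs hsC φ hφ
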